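/- arXiv:1101.6002 — 2 statements merged into one kernel-verified Lean document; each statement's English description precedes it below -/
import Mathlib

section
/- Conversely, if a nonzero homology class mu of a metric graph decomposes as mu = kappa + kappa' (or kappa - kappa') with kappa, kappa' nonzero and l(kappa) + l(kappa') <= l(mu), then no minimal-length closed walk representing mu is a cycle. -/
/-! The weighted ℓ¹-norm `‖x‖ = ∑ₑ l e * |x e|` of a 1-chain is a lower bound for the length of
every closed walk representing it, with equality for a walk repeating no edge. So if a minimal
representative of `μ` were a cycle, `‖κ‖ + ‖κ'‖ ≤ l(κ) + l(κ') ≤ l(μ) = ‖μ‖ ≤ ‖κ‖ + ‖κ'‖` forces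
`|μ e| = |κ e| + |κ' e|` on every edge; since `|μ e| ≤ 1`, the supports of `κ` and `κ'` are then
disjoint subsets of the cycle. But a cycle is a circuit: walking along it, the first vertex at
which a homology class supported on the cycle changes from nonzero to zero would carry nonzero
boundary. So `κ` vanishes on the whole cycle as soon as it vanishes on one edge of it. -/

open scoped Classical

/-- A finite multigraph: edges with a source and target vertex. -/
structure Multigraph (V E : Type) where
  src : E → V
  tgt : E → V

/-- A dart is an oriented edge: an edge together with a direction. -/
abbrev Dart (E : Type) := E × Bool

namespace Multigraph

variable {V E : Type}

/-- Source of a dart. -/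
def dsrc (G : Multigraph V E) (d : Dart E) : V := if d.2 then G.src d.1 else G.tgt d.1

/-- Target of a dart. -/
def dtgt (G : Multigraph V E) (d : Dart E) : V := if d.2 then G.tgt d.1 else G.src d.1

/-- A closed walk: a nonempty cyclically consistent list of darts. -/
def IsClosedWalk (G : Multigraph V E) (w : List (Dart E)) : Prop :=
  w ≠ [] ∧ List.Chain' (fun d d' => G.dtgt d = G.dsrc d') w ∧
    ∀ dl ∈ w.getLast?, ∀ dh ∈ w.head?, G.dtgt dl = G.dsrc dh

/-- A cycle: a closed walk repeating no edges and no vertices. -/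
def IsCycle (G : Multigraph V E) (w : List (Dart E)) : Prop :=
  G.IsClosedWalk w ∧ (w.map Prod.fst).Nodup ∧ (w.map G.dsrc).Nodup

/-- A walk from `u` to `v`. -/
def IsWalkFrom (G : Multigraph V E) (w : List (Dart E)) (u v : V) : Prop :=
  List.Chain' (fun d d' => G.dtgt d = G.dsrc d') w ∧
    (w = [] → u = v) ∧ (∀ d ∈ w.head?, G.dsrc d = u) ∧ (∀ d ∈ w.getLast?, G.dtgt d = v)

/-- Connectivity: any two vertices are joined by a walk. -/
def Conn (G : Multigraph V E) : Prop := ∀ u v : V, ∃ w, G.IsWalkFrom w u v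

/-- The 1-chain (with `ℤ` coefficients) of a single dart. -/
noncomputable def dartChain (d : Dart E) : E → ℤ :=
  fun e => if d.1 = e then (if d.2 then 1 else -1) else 0

/-- The 1-chain of a walk. -/
noncomputable def chain (w : List (Dart E)) : E → ℤ := (w.map dartChain).sum

/-- The length of a walk given edge lengths `l`. -/
def walkLength (l : E → ℝ) (w : List (Dart E)) : ℝ := (w.map fun d => l d.1).sum

/-- The set of (unoriented) edges used by a walk. -/
def edges (w : List (Dart E)) : Set E := {e | ∃ b, (e, b) ∈ w}

/-- The set of vertices visited by a closed walk. -/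
def vertsOf (G : Multigraph V E) (w : List (Dart E)) : Set V := {v | ∃ d ∈ w, G.dsrc d = v}

/-- Restriction of a graph to a set of edges. -/
def restrict (G : Multigraph V E) (S : Set E) : Multigraph V S where
  src e := G.src e.1
  tgt e := G.tgt e.1

/-- Deletion of a set of vertices (and all incident edges). -/
def deleteVerts (G : Multigraph V E) (X : Set V) :
    Multigraph {v // v ∉ X} {e // G.src e ∉ X ∧ G.tgt e ∉ X} where
  src e := ⟨G.src e.1, e.2.1⟩
  tgt e := ⟨G.tgt e.1, e.2.2⟩

/-- Degree of a vertex (loops count twice). -/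
noncomputable def degree (G : Multigraph V E) [Fintype E] (v : V) : ℕ :=
  (Finset.univ.filter fun e => G.src e = v).card +
  (Finset.univ.filter fun e => G.tgt e = v).card

/-- The boundary of a 1-chain. -/
noncomputable def boundary (G : Multigraph V E) [Fintype E] (x : E → ℤ) : V → ℤ :=
  fun v => ∑ e, x e * ((if G.tgt e = v then 1 else 0) - (if G.src e = v then 1 else 0))

/-- The first homology `H₁(G,ℤ)`, as the kernel of the boundary map. -/
def H1 (G : Multigraph V E) [Fintype E] : Submodule ℤ (E → ℤ) where
  carrier := {x | G.boundary x = 0}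
  add_mem' := by
    intro a b ha hb
    have h : G.boundary (a + b) = G.boundary a + G.boundary b := by
      funext v
      simp [boundary, add_mul, Finset.sum_add_distrib]
    simp only [Set.mem_setOf_eq] at *
    rw [h, ha, hb, add_zero]
  zero_mem' := by
    simp only [Set.mem_setOf_eq]
    funext v
    simp [boundary]
  smul_mem' := by
    intro c x hx
    have h : G.boundary (c • x) = c • G.boundary x := by
      funext v
      simp [boundary, Finset.mul_sum, mul_assoc]
    simp only [Set.mem_setOf_eq] at *
    rw [h, hx, smul_zero]

/-- The path metric induced by edge lengths. -/
noncomputable def gdist (G : Multigraph V E) (l : E → ℝ) (u v : V) : ℝ :=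
  sInf {x | ∃ w, G.IsWalkFrom w u v ∧ walkLength l w = x}

/-- Minimal length of a closed walk in a given homology class. -/
noncomputable def minLen (G : Multigraph V E) (l : E → ℝ) (h : E → ℤ) : ℝ :=
  sInf {x | ∃ w, G.IsClosedWalk w ∧ chain w = h ∧ walkLength l w = x}

end Multigraph

open Multigraph

open Fin.NatCast in
lemma Fin.forall_of_finRotate_closed {n : ℕ} {p : Fin n → Prop}
    (hp : ∀ k, p k → p (finRotate n k)) {i : Fin n} (hi : p i) (j : Fin n) : p j := by
  have := i.neZero
  have hreach : ∀ t : ℕ, p (i + (t : Fin n)) := by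
    intro t
    induction t with
    | zero => simpa using hi
    | succ t ih => simpa [finRotate_apply, add_assoc] using hp _ ih
  simpa using hreach (j - i).val

namespace Multigraph

variable {V E : Type}

lemma chain_cons (d : Dart E) (w : List (Dart E)) : chain (d :: w) = dartChain d + chain w := by
  simp [chain]

lemma dartChain_apply_of_ne {d : Dart E} {e : E} (h : d.1 ≠ e) : dartChain d e = 0 :=
  if_neg h

lemma abs_dartChain_apply_self (d : Dart E) : |dartChain d d.1| = 1 := by
  unfold dartChain
  rw [if_pos rfl]
  split_ifs <;> simp

lemma mem_edges_iff {w : List (Dart E)} {e : E} : e ∈ edges w ↔ e ∈ w.map Prod.fst := by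
  simp [edges]

lemma mem_edges_of_chain_apply_ne_zero {w : List (Dart E)} {e : E} (h : chain w e ≠ 0) :
    e ∈ edges w := by
  induction w with
  | nil => exact absurd rfl h
  | cons d w ih =>
    rw [chain_cons, Pi.add_apply] at h
    by_cases hd : d.1 = e
    · exact ⟨d.2, by simp [← hd]⟩
    · obtain ⟨b, hb⟩ := ih (by simpa [dartChain_apply_of_ne hd] using h)
      exact ⟨b, List.mem_cons_of_mem d hb⟩

lemma chain_apply_eq_zero_of_notMem_edges {w : List (Dart E)} {e : E} (h : e ∉ edges w) :
    chain w e = 0 := by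
  by_contra h'
  exact h (mem_edges_of_chain_apply_ne_zero h')

lemma dartChain_apply_eq_zero_or_chain_apply_eq_zero {d : Dart E} {w : List (Dart E)}
    (hnd : ((d :: w).map Prod.fst).Nodup) (e : E) : dartChain d e = 0 ∨ chain w e = 0 := by
  rw [List.map_cons, List.nodup_cons, ← mem_edges_iff] at hnd
  by_cases hd : d.1 = e
  · exact Or.inr (chain_apply_eq_zero_of_notMem_edges (hd ▸ hnd.1))
  · exact Or.inl (dartChain_apply_of_ne hd)

lemma abs_chain_apply_le_one {w : List (Dart E)} (hnd : (w.map Prod.fst).Nodup) (e : E) :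
    |chain w e| ≤ 1 := by
  induction w with
  | nil => simp [chain]
  | cons d w ih =>
    rw [chain_cons, Pi.add_apply]
    rcases dartChain_apply_eq_zero_or_chain_apply_eq_zero hnd e with h | h
    · rw [h, zero_add]
      exact ih (List.nodup_cons.mp hnd).2
    · rw [h, add_zero]
      unfold dartChain
      split_ifs <;> simp

section Norm

variable [Fintype E]

def chainNorm (l : E → ℝ) (x : E → ℤ) : ℝ := ∑ e, l e * |(x e : ℝ)|

lemma chainNorm_dartChain (l : E → ℝ) (d : Dart E) : chainNorm l (dartChain d) = l d.1 := by
  rw [chainNorm, Finset.sum_eq_single d.1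
    (fun e _ he => by simp [dartChain_apply_of_ne (Ne.symm he)])
    (fun h => absurd (Finset.mem_univ _) h)]
  rw [← Int.cast_abs, abs_dartChain_apply_self, Int.cast_one, mul_one]

lemma chainNorm_add_le {l : E → ℝ} (hl : ∀ e, 0 ≤ l e) (x y : E → ℤ) :
    chainNorm l (x + y) ≤ chainNorm l x + chainNorm l y := by
  simp only [chainNorm, ← Finset.sum_add_distrib, ← mul_add]
  gcongr with e _
  · exact hl e
  · rw [Pi.add_apply, Int.cast_add]
    exact abs_add_le _ _

lemma chainNorm_add_of_disjoint (l : E → ℝ) {x y : E → ℤ} (h : ∀ e, x e = 0 ∨ y e = 0) :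
    chainNorm l (x + y) = chainNorm l x + chainNorm l y := by
  simp only [chainNorm, ← Finset.sum_add_distrib, ← mul_add]
  refine Finset.sum_congr rfl fun e _ => ?_
  rcases h e with h | h <;> simp [h]

lemma chainNorm_chain_le_walkLength {l : E → ℝ} (hl : ∀ e, 0 ≤ l e) (w : List (Dart E)) :
    chainNorm l (chain w) ≤ walkLength l w := by
  induction w with
  | nil => simp [chainNorm, chain, walkLength]
  | cons d w ih =>
    calc chainNorm l (chain (d :: w)) ≤ l d.1 + chainNorm l (chain w) := by
          rw [chain_cons, ← chainNorm_dartChain l d]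
          exact chainNorm_add_le hl _ _
      _ ≤ l d.1 + walkLength l w := by linarith
      _ = walkLength l (d :: w) := by simp [walkLength]

lemma walkLength_eq_chainNorm_chain (l : E → ℝ) {w : List (Dart E)}
    (hnd : (w.map Prod.fst).Nodup) : walkLength l w = chainNorm l (chain w) := by
  induction w with
  | nil => simp [chainNorm, chain, walkLength]
  | cons d w ih =>
    rw [chain_cons,
      chainNorm_add_of_disjoint l (dartChain_apply_eq_zero_or_chain_apply_eq_zero hnd),
      chainNorm_dartChain, ← ih (List.nodup_cons.mp hnd).2]
    simp [walkLength]

lemma chainNorm_le_minLen (G : Multigraph V E) {l : E → ℝ} (hl : ∀ e, 0 ≤ l e) {x : E → ℤ}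
    (hx : ∃ w, G.IsClosedWalk w ∧ chain w = x) : chainNorm l x ≤ G.minLen l x := by
  obtain ⟨w, hw, rfl⟩ := hx
  refine le_csInf ⟨_, w, hw, rfl, rfl⟩ ?_
  rintro _ ⟨w', -, hc, rfl⟩
  rw [← hc]
  exact chainNorm_chain_le_walkLength hl w'

lemma abs_eq_abs_add_abs_of_chainNorm_add_le {l : E → ℝ} (hl : ∀ e, 0 < l e) {x y z : E → ℤ}
    (htri : ∀ e, |z e| ≤ |x e| + |y e|) (h : chainNorm l x + chainNorm l y ≤ chainNorm l z)
    (e : E) : |z e| = |x e| + |y e| := by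
  have hle : ∀ e ∈ Finset.univ, l e * |(z e : ℝ)| ≤ l e * |(x e : ℝ)| + l e * |(y e : ℝ)| :=
    fun e _ => by
      rw [← mul_add]
      exact mul_le_mul_of_nonneg_left (by exact_mod_cast htri e) (hl e).le
  have heq := (Finset.sum_eq_sum_iff_of_le hle).mp
    ((Finset.sum_le_sum hle).antisymm (by simpa [chainNorm, Finset.sum_add_distrib] using h))
    e (Finset.mem_univ e)
  rw [← mul_add] at heq
  exact_mod_cast mul_left_cancel₀ (hl e).ne' heq

end Norm

lemma isWalkFrom_nil (G : Multigraph V E) {u v : V} : G.IsWalkFrom [] u v ↔ u = v := by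
  simp [IsWalkFrom, List.Chain']

lemma isWalkFrom_cons (G : Multigraph V E) {d : Dart E} {w : List (Dart E)} {u v : V} :
    G.IsWalkFrom (d :: w) u v ↔ G.dsrc d = u ∧ G.IsWalkFrom w (G.dtgt d) v := by
  cases w with
  | nil => simp [IsWalkFrom, List.Chain']
  | cons d' w =>
    simp [IsWalkFrom, List.Chain', List.getLast?_cons_cons]
    tauto

lemma IsClosedWalk.isWalkFrom {G : Multigraph V E} {w : List (Dart E)} (hw : G.IsClosedWalk w) :
    G.IsWalkFrom w (G.dsrc (w.head hw.1)) (G.dsrc (w.head hw.1)) :=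
  ⟨hw.2.1, fun h => absurd h hw.1, by simp [List.head?_eq_some_head hw.1],
    fun _ hd => hw.2.2 _ hd _ (List.head?_eq_some_head hw.1)⟩

noncomputable def incidence (G : Multigraph V E) (e : E) (v : V) : ℤ :=
  (if G.tgt e = v then 1 else 0) - (if G.src e = v then 1 else 0)

lemma incidence_eq_zero {G : Multigraph V E} {e : E} {v : V} (hs : G.src e ≠ v)
    (ht : G.tgt e ≠ v) : G.incidence e v = 0 := by
  simp [incidence, hs, ht]

lemma incidence_ne_zero {G : Multigraph V E} {d : Dart E} {v : V} (ht : G.dtgt d = v)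
    (hs : G.dsrc d ≠ v) : G.incidence d.1 v ≠ 0 := by
  rcases d with ⟨e, _ | _⟩ <;> simp_all [incidence, dsrc, dtgt]

lemma src_eq_or_tgt_eq_iff (G : Multigraph V E) (d : Dart E) (v : V) :
    G.src d.1 = v ∨ G.tgt d.1 = v ↔ G.dsrc d = v ∨ G.dtgt d = v := by
  rcases d with ⟨e, _ | _⟩ <;> simp [dsrc, dtgt, or_comm]

section Boundary

variable [Fintype E] (G : Multigraph V E)

lemma boundary_apply (x : E → ℤ) (v : V) : G.boundary x v = ∑ e, x e * G.incidence e v := rfl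

lemma boundary_zero : G.boundary 0 = 0 := by
  funext v
  simp [boundary]

lemma boundary_add (x y : E → ℤ) : G.boundary (x + y) = G.boundary x + G.boundary y := by
  funext v
  simp [boundary, add_mul, Finset.sum_add_distrib]

lemma boundary_dartChain (d : Dart E) :
    G.boundary (dartChain d) = Pi.single (G.dtgt d) 1 - Pi.single (G.dsrc d) 1 := by
  funext v
  rw [boundary_apply, Finset.sum_eq_single d.1
    (fun e _ he => by simp [dartChain_apply_of_ne (Ne.symm he)])
    (fun h => absurd (Finset.mem_univ _) h)]
  rcases d with ⟨e, _ | _⟩ <;> simp [dartChain, incidence, dsrc, dtgt, Pi.single_apply, eq_comm]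

end Boundary

lemma IsWalkFrom.boundary_chain [Fintype E] {G : Multigraph V E} {w : List (Dart E)} {u v : V}
    (h : G.IsWalkFrom w u v) : G.boundary (chain w) = Pi.single v 1 - Pi.single u 1 := by
  induction w generalizing u with
  | nil => rw [(isWalkFrom_nil G).mp h, sub_self]; exact boundary_zero G
  | cons d w ih =>
    obtain ⟨rfl, hw⟩ := (isWalkFrom_cons G).mp h
    rw [chain_cons, boundary_add, boundary_dartChain, ih hw]
    abel

lemma IsClosedWalk.chain_mem_H1 [Fintype E] {G : Multigraph V E} {w : List (Dart E)}
    (hw : G.IsClosedWalk w) : chain w ∈ G.H1 :=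
  hw.isWalkFrom.boundary_chain.trans (sub_self _)

section Cycles

variable {G : Multigraph V E} {w : List (Dart E)}

lemma exists_getElem_fst_eq_of_mem_edges {e : E} (h : e ∈ edges w) :
    ∃ k : Fin w.length, w[k].1 = e := by
  obtain ⟨b, hb⟩ := h
  obtain ⟨k, hk, hkw⟩ := List.mem_iff_getElem.mp hb
  exact ⟨⟨k, hk⟩, by simp [hkw]⟩

lemma IsClosedWalk.dtgt_getElem (hw : G.IsClosedWalk w) (k : Fin w.length) :
    G.dtgt w[k] = G.dsrc w[finRotate _ k] := by
  have := k.neZero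
  have hval : (finRotate _ k).val = (k.val + 1) % w.length := by
    rw [finRotate_apply, Fin.val_add, Fin.val_one', Nat.add_mod_mod]
  by_cases hk : k.val + 1 < w.length
  · simp only [Fin.getElem_fin, hval, Nat.mod_eq_of_lt hk]
    exact List.isChain_iff_getElem.mp hw.2.1 k hk
  · have hlast : k.val = w.length - 1 := by omega
    simp only [Fin.getElem_fin, hval, show k.val + 1 = w.length by omega, Nat.mod_self]
    refine hw.2.2 _ ?_ _ (by simp [List.head?_eq_getElem?])
    simp [List.getLast?_eq_getElem?, hlast]

lemma dsrc_getElem_injective (hnd : (w.map G.dsrc).Nodup) :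
    Function.Injective fun k : Fin w.length => G.dsrc w[k] := by
  intro a b h
  have hw : w.Nodup := hnd.of_map _
  exact Fin.ext ((hw.getElem_inj_iff).mp
    (List.inj_on_of_nodup_map hnd (List.getElem_mem _) (List.getElem_mem _) h))

variable [Fintype E]

lemma IsClosedWalk.boundary_apply_ne_zero (hw : G.IsClosedWalk w) (hnd : (w.map G.dsrc).Nodup)
    {x : E → ℤ} (hsupp : ∀ e, x e ≠ 0 → e ∈ edges w) {k : Fin w.length}
    (hk : x w[k].1 ≠ 0) (hk' : x w[finRotate _ k].1 = 0) :
    G.boundary x (G.dsrc w[finRotate _ k]) ≠ 0 := by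
  set v := G.dsrc w[finRotate _ k]
  -- `v` is entered only by `w[k]` and left only by its successor, which carries no `x`.
  have hinj := dsrc_getElem_injective hnd
  have hsrc : G.dsrc w[k] ≠ v := fun h => hk (hinj h ▸ hk')
  have hother : ∀ e ≠ w[k].1, x e * G.incidence e v = 0 := by
    intro e he
    by_cases hxe : x e = 0
    · rw [hxe, zero_mul]
    obtain ⟨m, rfl⟩ := exists_getElem_fst_eq_of_mem_edges (hsupp e hxe)
    have hm : ¬(G.dsrc w[m] = v ∨ G.dtgt w[m] = v) := by
      rintro (h | h)
      · exact hxe (hinj h ▸ hk')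
      · rw [hw.dtgt_getElem] at h
        exact he (by rw [(finRotate _).injective (hinj h)])
    obtain ⟨hs, ht⟩ := not_or.mp (mt (src_eq_or_tgt_eq_iff G w[m] v).mp hm)
    rw [incidence_eq_zero hs ht, mul_zero]
  rw [boundary_apply, Finset.sum_eq_single _ (fun e _ => hother e)
    (fun h => absurd (Finset.mem_univ _) h)]
  exact mul_ne_zero hk (incidence_ne_zero (hw.dtgt_getElem k) hsrc)

theorem IsClosedWalk.eq_zero_of_mem_H1 (hw : G.IsClosedWalk w) (hnd : (w.map G.dsrc).Nodup)
    {x : E → ℤ} (hx : x ∈ G.H1) (hsupp : ∀ e, x e ≠ 0 → e ∈ edges w) {e₀ : E}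
    (he₀ : e₀ ∈ edges w) (hxe₀ : x e₀ = 0) : x = 0 := by
  by_contra hne
  obtain ⟨e₁, he₁⟩ := Function.ne_iff.mp hne
  obtain ⟨i, rfl⟩ := exists_getElem_fst_eq_of_mem_edges (hsupp e₁ he₁)
  obtain ⟨j, rfl⟩ := exists_getElem_fst_eq_of_mem_edges he₀
  refine Fin.forall_of_finRotate_closed (p := fun k : Fin w.length => x w[k].1 ≠ 0)
    (fun k hk => ?_) he₁ j hxe₀
  by_contra hk'
  exact hw.boundary_apply_ne_zero hnd hsupp hk hk' (congrFun hx _)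

end Cycles

end Multigraph

theorem stmt15_general {V E : Type} [Fintype E] (G : Multigraph V E)
    (l : E → ℝ) (hl : ∀ e, 0 < l e)
    (μ κ κ' : E → ℤ) (hκ : κ ≠ 0) (hκ' : κ' ≠ 0)
    (hrκ : ∃ w, G.IsClosedWalk w ∧ Multigraph.chain w = κ)
    (hrκ' : ∃ w, G.IsClosedWalk w ∧ Multigraph.chain w = κ')
    (hdec : μ = κ + κ' ∨ μ = κ - κ')
    (hlen : G.minLen l κ + G.minLen l κ' ≤ G.minLen l μ) :
    ∀ w, G.IsClosedWalk w → Multigraph.chain w = μ →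
      Multigraph.walkLength l w = G.minLen l μ → ¬ G.IsCycle w := by
  rintro w hw rfl hmin ⟨-, hnde, hndv⟩
  have hsplit : ∀ e, |chain w e| = |κ e| + |κ' e| := by
    refine abs_eq_abs_add_abs_of_chainNorm_add_le hl (fun e => ?_) ?_
    · rcases hdec with h | h <;> rw [h]
      exacts [abs_add_le _ _, abs_sub _ _]
    · calc chainNorm l κ + chainNorm l κ'
          ≤ G.minLen l κ + G.minLen l κ' :=
            add_le_add (chainNorm_le_minLen G (fun e => (hl e).le) hrκ)
              (chainNorm_le_minLen G (fun e => (hl e).le) hrκ')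
        _ ≤ G.minLen l (chain w) := hlen
        _ = chainNorm l (chain w) := by rw [← hmin, walkLength_eq_chainNorm_chain l hnde]
  have hsupp : ∀ e, κ e ≠ 0 ∨ κ' e ≠ 0 → e ∈ edges w := by
    intro e he
    refine mem_edges_of_chain_apply_ne_zero (abs_pos.mp ?_)
    rw [hsplit]
    rcases he with he | he <;> positivity
  obtain ⟨e₁, he₁⟩ := Function.ne_iff.mp hκ'
  have hκe₁ : κ e₁ = 0 := by
    have hle := hsplit e₁ ▸ abs_chain_apply_le_one hnde e₁
    have hpos := Int.one_le_abs he₁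
    exact abs_nonpos_iff.mp (by omega)
  exact hκ (hw.eq_zero_of_mem_H1 hndv (hrκ.elim fun _ h => h.2 ▸ h.1.chain_mem_H1)
    (fun e he => hsupp e (Or.inl he)) (hsupp e₁ (Or.inr he₁)) hκe₁)

/-- if a nonzero homology class `μ` decomposes as `μ = κ + κ'` or
`μ = κ - κ'` with `κ, κ'` nonzero homology classes and `l(κ) + l(κ') ≤ l(μ)`, then no
minimal-length closed walk representing `μ` is a cycle. -/
theorem stmt15 {V E : Type} [Fintype V] [Fintype E] (G : Multigraph V E)
    (l : E → ℝ) (hl : ∀ e, 0 < l e)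
    (μ κ κ' : E → ℤ) (hμ : μ ≠ 0) (hκ : κ ≠ 0) (hκ' : κ' ≠ 0)
    (hrμ : ∃ w, G.IsClosedWalk w ∧ Multigraph.chain w = μ)
    (hrκ : ∃ w, G.IsClosedWalk w ∧ Multigraph.chain w = κ)
    (hrκ' : ∃ w, G.IsClosedWalk w ∧ Multigraph.chain w = κ')
    (hdec : μ = κ + κ' ∨ μ = κ - κ')
    (hlen : G.minLen l κ + G.minLen l κ' ≤ G.minLen l μ) :
    ∀ w, G.IsClosedWalk w → Multigraph.chain w = μ →
      Multigraph.walkLength l w = G.minLen l μ → ¬ G.IsCycle w :=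
  stmt15_general G l hl μ κ κ' hκ hκ' hrκ hrκ' hdec hlen
end

section
/- In a 3-connected graph, for every edge e with endpoints u and v, there exist two cycles c_1, c_2 both containing e that are disjoint away from e (they share only e and its endpoints); consequently, in the metric graph, l(e) = (l(c_1) + l(c_2) - l(c_3))/2, where c_3 is the cycle formed by (c_1 minus e) followed by the reversal of (c_2 minus e). -/
open scoped Classical

open Multigraph

/-!
Let `u, v` be the ends of `e`. Everything follows from two paths `P, Q` from `u` to `v` in
`G - e` that share no edge and meet only at `u` and `v`: take `c₁ = e P⁻¹`, `c₂ = e Q⁻¹` and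
`c₃ = Q P⁻¹`; the chain and length identities are then bookkeeping.

By 3-connectivity `G - e` stays connected after deleting any one vertex, and in such a graph
any two distinct vertices `a, b` are joined by two such paths (Whitney). Induct along a path
from `a` to `b`: if `P, Q` serve for the vertex `w` preceding `b`, extend `Q` by the last edge
`w b`. A path `R` from `b` that avoids `w` and stops at its first vertex `x` on `P ∪ Q` exists;
if `x` lies on `P`, replace `P` by its segment from `a` to `x` followed by `R` backwards.
-/

def Dart.symm {E : Type} (d : Dart E) : Dart E := (d.1, !d.2)

@[simp] theorem Dart.fst_symm {E : Type} (d : Dart E) : (Dart.symm d).1 = d.1 := rfl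

namespace Multigraph

variable {V E : Type} {G : Multigraph V E}

@[simp] theorem dsrc_symm (d : Dart E) : G.dsrc (Dart.symm d) = G.dtgt d := by
  cases d with | mk g b => cases b <;> rfl

@[simp] theorem dtgt_symm (d : Dart E) : G.dtgt (Dart.symm d) = G.dsrc d := by
  cases d with | mk g b => cases b <;> rfl

theorem dsrc_eq_src_or_tgt (d : Dart E) :
    (G.dsrc d = G.src d.1 ∧ G.dtgt d = G.tgt d.1) ∨
      (G.dsrc d = G.tgt d.1 ∧ G.dtgt d = G.src d.1) := by
  cases d with | mk g b => cases b <;> simp [dsrc, dtgt]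

def reverseWalk (w : List (Dart E)) : List (Dart E) := (w.map Dart.symm).reverse

theorem reverseWalk_cons (d : Dart E) (w : List (Dart E)) :
    reverseWalk (d :: w) = reverseWalk w ++ [Dart.symm d] := by
  simp [reverseWalk]

@[simp] theorem map_dsrc_reverseWalk (w : List (Dart E)) :
    (reverseWalk w).map G.dsrc = (w.map G.dtgt).reverse := by
  simp [reverseWalk, List.map_reverse, Function.comp_def]

theorem map_fst_reverseWalk (w : List (Dart E)) :
    (reverseWalk w).map Prod.fst = (w.map Prod.fst).reverse := by
  simp [reverseWalk, List.map_reverse, Function.comp_def]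

theorem mem_edges {w : List (Dart E)} {g : E} : g ∈ edges w ↔ g ∈ w.map Prod.fst :=
  ⟨fun ⟨_, hb⟩ => List.mem_map_of_mem hb, fun h =>
    let ⟨⟨_, b⟩, hd, hg⟩ := List.mem_map.mp h
    ⟨b, hg ▸ hd⟩⟩

@[simp] theorem edges_append (w₁ w₂ : List (Dart E)) :
    edges (w₁ ++ w₂) = edges w₁ ∪ edges w₂ := by
  ext g; simp [edges, exists_or]

@[simp] theorem edges_singleton (d : Dart E) : edges [d] = {d.1} := by
  ext g; simp [mem_edges]

@[simp] theorem edges_reverseWalk (w : List (Dart E)) : edges (reverseWalk w) = edges w := by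
  ext g
  rw [mem_edges, mem_edges, map_fst_reverseWalk, List.mem_reverse]

theorem edges_subset_edges {p w : List (Dart E)} (h : p ⊆ w) : edges p ⊆ edges w :=
  fun _ ⟨b, hb⟩ => ⟨b, h hb⟩

theorem mem_vertsOf {w : List (Dart E)} {y : V} : y ∈ G.vertsOf w ↔ y ∈ w.map G.dsrc :=
  ⟨fun ⟨_, hd, h⟩ => h ▸ List.mem_map_of_mem hd, fun h =>
    let ⟨d, hd, h⟩ := List.mem_map.mp h
    ⟨d, hd, h⟩⟩

theorem chain_append (w₁ w₂ : List (Dart E)) : chain (w₁ ++ w₂) = chain w₁ + chain w₂ := by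
  simp [chain]

theorem chain_singleton (d : Dart E) : chain [d] = dartChain d := by
  simp [chain]

theorem dartChain_symm (d : Dart E) : dartChain (Dart.symm d) = -dartChain d := by
  funext g
  by_cases h : d.1 = g <;> cases d with | mk g' b => cases b <;> simp_all [dartChain, Dart.symm]

theorem chain_reverseWalk (w : List (Dart E)) : chain (reverseWalk w) = -chain w := by
  induction w with
  | nil => rfl
  | cons d w ih =>
    rw [reverseWalk_cons, chain_append, ih, chain_singleton, dartChain_symm,
      ← List.singleton_append, chain_append, chain_singleton]
    abel

theorem walkLength_append (l : E → ℝ) (w₁ w₂ : List (Dart E)) :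
    walkLength l (w₁ ++ w₂) = walkLength l w₁ + walkLength l w₂ := by
  simp [walkLength]

theorem walkLength_singleton (l : E → ℝ) (d : Dart E) : walkLength l [d] = l d.1 := by
  simp [walkLength]

theorem walkLength_reverseWalk (l : E → ℝ) (w : List (Dart E)) :
    walkLength l (reverseWalk w) = walkLength l w := by
  simp [walkLength, reverseWalk, List.map_reverse, Function.comp_def, List.sum_reverse]

inductive IsWalk (G : Multigraph V E) : V → List (Dart E) → V → Prop
  | nil (u : V) : IsWalk G u [] u
  | cons {u v : V} {d : Dart E} {w : List (Dart E)} :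
      G.dsrc d = u → IsWalk G (G.dtgt d) w v → IsWalk G u (d :: w) v

def support (G : Multigraph V E) (u : V) (w : List (Dart E)) : List V := u :: w.map G.dtgt

theorem support_singleton (u : V) (d : Dart E) : G.support u [d] = [u, G.dtgt d] := rfl

theorem support_cons (u : V) (d : Dart E) (w : List (Dart E)) :
    G.support u (d :: w) = u :: G.support (G.dtgt d) w := rfl

theorem support_append (u : V) (w₁ w₂ : List (Dart E)) :
    G.support u (w₁ ++ w₂) = G.support u w₁ ++ w₂.map G.dtgt := by
  simp [support]

theorem support_subset_support {u : V} {p w : List (Dart E)} (h : p ⊆ w) :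
    G.support u p ⊆ G.support u w :=
  List.cons_subset_cons _ (List.map_subset _ h)

theorem start_mem_support (u : V) (w : List (Dart E)) : u ∈ G.support u w :=
  List.mem_cons_self

theorem dtgt_mem_support {u : V} {w : List (Dart E)} {d : Dart E} (hd : d ∈ w) :
    G.dtgt d ∈ G.support u w :=
  List.mem_cons_of_mem _ (List.mem_map_of_mem hd)

namespace IsWalk

variable {u v x : V} {w w₁ w₂ : List (Dart E)}

theorem eq_of_nil (h : G.IsWalk u [] v) : u = v := by
  cases h; rfl

theorem single (d : Dart E) : G.IsWalk (G.dsrc d) [d] (G.dtgt d) :=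
  cons rfl (nil _)

theorem append (h₁ : G.IsWalk u w₁ v) (h₂ : G.IsWalk v w₂ x) : G.IsWalk u (w₁ ++ w₂) x := by
  induction h₁ with
  | nil => exact h₂
  | cons hd _ ih => exact cons hd (ih h₂)

theorem reverseWalk (h : G.IsWalk u w v) : G.IsWalk v (Multigraph.reverseWalk w) u := by
  induction h with
  | nil => exact nil _
  | cons hd _ ih =>
    rw [reverseWalk_cons]
    exact ih.append (hd ▸ by simpa using single (G := G) (Dart.symm _))

theorem map_dsrc_append (h : G.IsWalk u w v) : w.map G.dsrc ++ [v] = G.support u w := by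
  induction h with
  | nil => rfl
  | cons hd _ ih => simp_all [support]

theorem support_reverseWalk (h : G.IsWalk u w v) :
    G.support v (Multigraph.reverseWalk w) = (G.support u w).reverse := by
  rw [← h.reverseWalk.map_dsrc_append, map_dsrc_reverseWalk, support, List.reverse_cons]

theorem end_mem_support (h : G.IsWalk u w v) : v ∈ G.support u w := by
  rw [← h.map_dsrc_append]; simp

theorem dsrc_mem_support (h : G.IsWalk u w v) {d : Dart E} (hd : d ∈ w) :
    G.dsrc d ∈ G.support u w := by
  rw [← h.map_dsrc_append]
  exact List.mem_append_left _ (List.mem_map_of_mem hd)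

theorem endpoints_mem_support (h : G.IsWalk u w v) {g : E} (hg : g ∈ edges w) :
    G.src g ∈ G.support u w ∧ G.tgt g ∈ G.support u w := by
  obtain ⟨d, hd, rfl⟩ := List.mem_map.mp (mem_edges.mp hg)
  have := h.dsrc_mem_support hd
  have := dtgt_mem_support (G := G) (u := u) hd
  rcases dsrc_eq_src_or_tgt (G := G) d with ⟨h₁, h₂⟩ | ⟨h₁, h₂⟩ <;> simp_all

theorem dart_endpoints_mem_support (h : G.IsWalk u w v) {d : Dart E} (hd : d.1 ∈ edges w) :
    G.dsrc d ∈ G.support u w ∧ G.dtgt d ∈ G.support u w := by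
  have := h.endpoints_mem_support hd
  rcases dsrc_eq_src_or_tgt (G := G) d with ⟨h₁, h₂⟩ | ⟨h₁, h₂⟩ <;> simp_all

theorem mem_support_append_iff (h : G.IsWalk u w₁ x) {y : V} :
    y ∈ G.support u (w₁ ++ w₂) ↔ y ∈ G.support u w₁ ∨ y ∈ G.support x w₂ := by
  rw [support_append, List.mem_append]
  change _ ↔ _ ∨ y ∈ x :: _
  rw [List.mem_cons]
  refine ⟨fun h' => h'.imp_right Or.inr, ?_⟩
  rintro (h' | rfl | h')
  exacts [Or.inl h', Or.inl h.end_mem_support, Or.inr h']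

theorem mem_support_reverseWalk_iff (h : G.IsWalk u w v) {y : V} :
    y ∈ G.support v (Multigraph.reverseWalk w) ↔ y ∈ G.support u w := by
  rw [h.support_reverseWalk, List.mem_reverse]

theorem split (h : G.IsWalk u w v) (hx : x ∈ G.support u w) :
    ∃ w₁ w₂, w = w₁ ++ w₂ ∧ G.IsWalk u w₁ x ∧ G.IsWalk x w₂ v := by
  induction h with
  | nil u =>
    obtain rfl := List.mem_singleton.mp hx
    exact ⟨[], [], rfl, .nil _, .nil _⟩
  | @cons u v d w hd h ih =>
    rcases List.mem_cons.mp hx with rfl | hx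
    · exact ⟨[], d :: w, rfl, .nil _, .cons hd h⟩
    · obtain ⟨w₁, w₂, rfl, h₁, h₂⟩ := ih hx
      exact ⟨d :: w₁, w₂, rfl, .cons hd h₁, h₂⟩

theorem exists_prefix_first_mem (S : Set V) (h : G.IsWalk u w v) (hv : v ∈ S) :
    ∃ p x, p ⊆ w ∧ G.IsWalk u p x ∧ x ∈ S ∧ ∀ y ∈ G.support u p, y ∈ S → y = x := by
  induction h with
  | nil u => exact ⟨[], u, by simp, .nil u, hv, by simp [support]⟩
  | @cons u v d w hd h ih =>
    by_cases hu : u ∈ S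
    · exact ⟨[], u, by simp, .nil u, hu, by simp [support]⟩
    obtain ⟨p, x, hpw, hp, hx, hfirst⟩ := ih hv
    refine ⟨d :: p, x, List.cons_subset_cons _ hpw, .cons hd hp, hx, ?_⟩
    rintro y (_ | ⟨_, hy⟩) hyS
    exacts [absurd hyS hu, hfirst y hy hyS]

end IsWalk

theorem isWalk_append_iff {u v : V} {w₁ w₂ : List (Dart E)} :
    G.IsWalk u (w₁ ++ w₂) v ↔ ∃ x, G.IsWalk u w₁ x ∧ G.IsWalk x w₂ v := by
  refine ⟨fun h => ?_, fun ⟨x, h₁, h₂⟩ => h₁.append h₂⟩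
  induction w₁ generalizing u with
  | nil => exact ⟨u, .nil u, h⟩
  | cons d w ih =>
    obtain _ | ⟨hd, h⟩ := h
    obtain ⟨x, h₁, h₂⟩ := ih h
    exact ⟨x, .cons hd h₁, h₂⟩

theorem isWalk_singleton_iff {u v : V} {d : Dart E} :
    G.IsWalk u [d] v ↔ G.dsrc d = u ∧ G.dtgt d = v :=
  ⟨fun | .cons hd h => ⟨hd, h.eq_of_nil⟩, fun ⟨hu, hv⟩ => hu ▸ hv ▸ .single d⟩

theorem isWalkFrom_iff {u v : V} {w : List (Dart E)} :
    G.IsWalkFrom w u v ↔ List.IsChain (fun d d' => G.dtgt d = G.dsrc d') w ∧ (w = [] → u = v) ∧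
      (∀ d ∈ w.head?, G.dsrc d = u) ∧ ∀ d ∈ w.getLast?, G.dtgt d = v :=
  Iff.rfl

theorem isWalkFrom_cons_iff {u v : V} {d : Dart E} {w : List (Dart E)} :
    G.IsWalkFrom (d :: w) u v ↔ G.dsrc d = u ∧ G.IsWalkFrom w (G.dtgt d) v := by
  cases w
  · simp [isWalkFrom_iff, eq_comm]
  · simp [isWalkFrom_iff, List.isChain_cons, eq_comm]
    tauto

theorem isWalk_iff_isWalkFrom {u v : V} {w : List (Dart E)} :
    G.IsWalk u w v ↔ G.IsWalkFrom w u v := by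
  induction w generalizing u with
  | nil => exact ⟨fun h => by cases h; simp [isWalkFrom_iff], fun h => h.2.1 rfl ▸ .nil u⟩
  | cons d w ih =>
    rw [isWalkFrom_cons_iff, ← ih]
    exact ⟨fun | .cons hd h => ⟨hd, h⟩, fun ⟨hd, h⟩ => .cons hd h⟩

theorem IsWalk.isClosedWalk {u : V} {w : List (Dart E)} (h : G.IsWalk u w u) (hw : w ≠ []) :
    G.IsClosedWalk w := by
  obtain ⟨hc, -, hh, hl⟩ := isWalk_iff_isWalkFrom.mp h
  exact ⟨hw, hc, fun dl hdl dh hdh => (hl dl hdl).trans (hh dh hdh).symm⟩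

section Paths

variable {u v x : V} {w p p₁ p₂ : List (Dart E)}

def IsPath (G : Multigraph V E) (u : V) (p : List (Dart E)) (v : V) : Prop :=
  G.IsWalk u p v ∧ (G.support u p).Nodup

theorem isPath_singleton {d : Dart E} (h : G.dsrc d ≠ G.dtgt d) :
    G.IsPath (G.dsrc d) [d] (G.dtgt d) :=
  ⟨.single d, by simp [support, h]⟩

namespace IsPath

theorem split (h : G.IsPath u p v) (hx : x ∈ G.support u p) :
    ∃ p₁ p₂, p = p₁ ++ p₂ ∧ G.IsPath u p₁ x ∧ G.IsPath x p₂ v ∧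
      ∀ y ∈ G.support u p₁, y ∈ G.support x p₂ → y = x := by
  obtain ⟨p₁, p₂, rfl, h₁, h₂⟩ := h.1.split hx
  have hnd := List.nodup_append'.mp (support_append (G := G) u p₁ p₂ ▸ h.2)
  have hx₂ : x ∉ p₂.map G.dtgt := fun hx => hnd.2.2 h₁.end_mem_support hx
  refine ⟨p₁, p₂, rfl, ⟨h₁, hnd.1⟩, ⟨h₂, List.nodup_cons.mpr ⟨hx₂, hnd.2.1⟩⟩, ?_⟩
  rintro y hy₁ (_ | ⟨_, hy₂⟩)
  exacts [rfl, absurd hy₂ (hnd.2.2 hy₁)]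

theorem append (h₁ : G.IsPath u p₁ v) (h₂ : G.IsPath v p₂ x)
    (hmeet : ∀ y ∈ G.support u p₁, y ∈ G.support v p₂ → y = v) :
    G.IsPath u (p₁ ++ p₂) x := by
  refine ⟨h₁.1.append h₂.1, ?_⟩
  have hv := List.nodup_cons.mp h₂.2
  rw [support_append]
  refine List.nodup_append'.mpr ⟨h₁.2, hv.2, fun y hy₁ hy₂ => ?_⟩
  exact hv.1 (hmeet y hy₁ (List.mem_cons_of_mem _ hy₂) ▸ hy₂)

theorem reverseWalk (h : G.IsPath u p v) : G.IsPath v (Multigraph.reverseWalk p) u :=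
  ⟨h.1.reverseWalk, h.1.support_reverseWalk ▸ List.nodup_reverse.mpr h.2⟩

theorem nodup_edges (h : G.IsPath u p v) : (p.map Prod.fst).Nodup := by
  obtain ⟨h, hnd⟩ := h
  induction h with
  | nil => simp
  | @cons u v d w hd h ih =>
    have hu := List.nodup_cons.mp hnd
    refine List.nodup_cons.mpr ⟨fun hdw => hu.1 ?_, ih hu.2⟩
    exact hd ▸ (h.dart_endpoints_mem_support (mem_edges.mpr hdw)).1

theorem isCycle_append_reverseWalk {P Q : List (Dart E)} (hP : G.IsPath u P v)
    (hQ : G.IsPath u Q v) (huv : u ≠ v)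
    (hmeet : ∀ y ∈ G.support u P, y ∈ G.support u Q → y = u ∨ y = v)
    (hdisj : Disjoint (edges P) (edges Q)) : G.IsCycle (Q ++ Multigraph.reverseWalk P) := by
  have hQ' : Q ≠ [] := by rintro rfl; exact huv hQ.1.eq_of_nil
  refine ⟨(hQ.1.append hP.1.reverseWalk).isClosedWalk (by simp [hQ']), ?_, ?_⟩
  · rw [List.map_append, map_fst_reverseWalk]
    refine List.nodup_append'.mpr ⟨hQ.nodup_edges, List.nodup_reverse.mpr hP.nodup_edges,
      fun g hgQ hgP => Set.disjoint_left.mp hdisj ?_ (mem_edges.mpr hgQ)⟩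
    exact mem_edges.mpr (List.mem_reverse.mp hgP)
  · have hQs := List.nodup_append'.mp (hQ.1.map_dsrc_append ▸ hQ.2)
    have hPs := List.nodup_cons.mp hP.2
    rw [List.map_append, map_dsrc_reverseWalk]
    refine List.nodup_append'.mpr ⟨hQs.1, List.nodup_reverse.mpr hPs.2, fun y hyQ hyP => ?_⟩
    rw [List.mem_reverse] at hyP
    rcases hmeet y (List.mem_cons_of_mem _ hyP)
      (hQ.1.map_dsrc_append ▸ List.mem_append_left _ hyQ) with rfl | rfl
    · exact hPs.1 hyP
    · exact hQs.2.2 hyQ (List.mem_singleton_self _)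

theorem concat {f : Dart E} (h : G.IsPath u p v) (hf : G.dsrc f = v)
    (hfp : G.dtgt f ∉ G.support u p) : G.IsPath u (p ++ [f]) (G.dtgt f) := by
  refine ⟨h.1.append (hf ▸ .single f), ?_⟩
  rw [support_append, List.map_singleton, ← List.concat_eq_append, List.nodup_concat]
  exact ⟨hfp, h.2⟩

end IsPath

theorem IsWalk.exists_isPath (h : G.IsWalk u w v) : ∃ p, G.IsPath u p v ∧ p ⊆ w := by
  induction h with
  | nil u => exact ⟨[], ⟨.nil u, by simp [support]⟩, by simp⟩
  | @cons u v d w hd h ih =>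
    obtain ⟨p, hp, hpw⟩ := ih
    by_cases hu : u ∈ G.support (G.dtgt d) p
    · obtain ⟨p₁, p₂, rfl, -, hp₂, -⟩ := hp.split hu
      exact ⟨p₂, hp₂, fun d' hd' => List.mem_cons_of_mem _ (hpw (List.mem_append_right _ hd'))⟩
    · exact ⟨d :: p, ⟨.cons hd hp.1, List.nodup_cons.mpr ⟨hu, hp.2⟩⟩,
        List.cons_subset_cons _ hpw⟩

end Paths

section Whitney

variable {e : E} {a b w x : V} {f : Dart E}

def HasDisjointPathsAvoiding (G : Multigraph V E) (e : E) (a b : V) : Prop :=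
  ∃ P Q, G.IsPath a P b ∧ G.IsPath a Q b ∧ e ∉ edges P ∧ e ∉ edges Q ∧
    Disjoint (edges P) (edges Q) ∧ ∀ y ∈ G.support a P, y ∈ G.support a Q → y = a ∨ y = b

theorem hasDisjointPathsAvoiding_dsrc_dtgt
    (hconn : ∀ x a b, a ≠ x → b ≠ x → ∃ w, G.IsWalk a w b ∧ x ∉ G.support a w ∧ e ∉ edges w)
    {z : V} (hza : z ≠ G.dsrc f) (hzb : z ≠ G.dtgt f) (hf : G.dsrc f ≠ G.dtgt f)
    (hfe : f.1 ≠ e) : G.HasDisjointPathsAvoiding e (G.dsrc f) (G.dtgt f) := by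
  obtain ⟨w₁, hw₁, hbw₁, hew₁⟩ := hconn (G.dtgt f) (G.dsrc f) z hf hzb
  obtain ⟨w₂, hw₂, haw₂, hew₂⟩ := hconn (G.dsrc f) z (G.dtgt f) hza hf.symm
  obtain ⟨Q, hQ, hQw⟩ := (hw₁.append hw₂).exists_isPath
  have hQe := edges_subset_edges hQw
  rw [edges_append] at hQe
  refine ⟨[f], Q, isPath_singleton hf, hQ, by simpa using hfe.symm, fun he => ?_, ?_, ?_⟩
  · rcases hQe he with he | he <;> simp_all
  · rw [edges_singleton, Set.disjoint_singleton_left]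
    intro hfQ
    rcases hQe hfQ with h | h
    exacts [hbw₁ (hw₁.dart_endpoints_mem_support h).2, haw₂ (hw₂.dart_endpoints_mem_support h).1]
  · simp [support]

/-- The new paths are `P` cut at `x` and continued along `R` backwards to `b`, and `Q`
followed by `f`. (`R` is empty when `b` already lies on `P`.) -/
theorem hasDisjointPathsAvoiding_of_reroute (hloop : ∀ g, G.src g ≠ G.tgt g)
    {P Q R : List (Dart E)} (hP : G.IsPath a P w) (hQ : G.IsPath a Q w)
    (hPe : e ∉ edges P) (hQe : e ∉ edges Q) (hdisj : Disjoint (edges P) (edges Q))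
    (hmeet : ∀ y ∈ G.support a P, y ∈ G.support a Q → y = a ∨ y = w)
    (hfw : G.dsrc f = w) (hfb : G.dtgt f = b) (hfe : f.1 ≠ e) (hab : a ≠ b)
    (hR : G.IsPath b R x) (hRe : e ∉ edges R) (hwR : w ∉ G.support b R)
    (hxP : x ∈ G.support a P) (hRP : ∀ y ∈ G.support b R, y ∈ G.support a P → y = x)
    (hRQ : ∀ y ∈ G.support b R, y ∈ G.support a Q → y = x) :
    G.HasDisjointPathsAvoiding e a b := by
  obtain ⟨P₁, P₂, rfl, hP₁, hP₂, hP₁₂⟩ := hP.split hxP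
  have hP₁P : ∀ y ∈ G.support a P₁, y ∈ G.support a (P₁ ++ P₂) :=
    fun y hy => hP₁.1.mem_support_append_iff.mpr (Or.inl hy)
  have hxw : x ≠ w := fun h => hwR (h ▸ hR.1.end_mem_support)
  have hwP₁ : w ∉ G.support a P₁ := fun h => hxw (hP₁₂ w h hP₂.1.end_mem_support).symm
  have hxQ : x ∈ G.support a Q → x = a := fun h => (hmeet x hxP h).resolve_right hxw
  have hbQ : b ∉ G.support a Q := by
    intro h
    obtain rfl := hRQ b (start_mem_support b R) h
    exact hab (hxQ h).symm
  have hP' : G.IsPath a (P₁ ++ reverseWalk R) b := hP₁.append hR.reverseWalk fun y hy₁ hy₂ =>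
    hRP y (hR.1.mem_support_reverseWalk_iff.mp hy₂) (hP₁P y hy₁)
  have hQ' : G.IsPath a (Q ++ [f]) b := hfb ▸ hQ.concat hfw (hfb ▸ hbQ)
  rw [edges_append] at hPe hdisj
  refine ⟨_, _, hP', hQ', ?_, ?_, ?_, fun y hy₁ hy₂ => ?_⟩
  · rw [edges_append, edges_reverseWalk, Set.mem_union, not_or]
    exact ⟨fun h => hPe (Or.inl h), hRe⟩
  · rw [edges_append, edges_singleton, Set.mem_union, not_or]
    exact ⟨hQe, Ne.symm hfe⟩
  · rw [edges_append, edges_append, edges_reverseWalk, edges_singleton, Set.disjoint_union_left,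
      Set.disjoint_union_right, Set.disjoint_union_right, Set.disjoint_singleton_right,
      Set.disjoint_singleton_right]
    refine ⟨⟨hdisj.mono_left Set.subset_union_left,
      fun h => hwP₁ (hfw ▸ (hP₁.1.dart_endpoints_mem_support h).1)⟩,
      -- an edge on both `R` and `Q` would have both ends at `x`
      Set.disjoint_left.mpr fun g hgR hgQ => hloop g ?_,
      fun h => hwR (hfw ▸ (hR.1.dart_endpoints_mem_support h).1)⟩
    have hs := hRQ _ (hR.1.endpoints_mem_support hgR).1 (hQ.1.endpoints_mem_support hgQ).1
    have ht := hRQ _ (hR.1.endpoints_mem_support hgR).2 (hQ.1.endpoints_mem_support hgQ).2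
    exact hs.trans ht.symm
  · rw [hP₁.1.mem_support_append_iff, hR.1.mem_support_reverseWalk_iff] at hy₁
    rw [hQ.1.mem_support_append_iff, support_singleton, hfb, List.mem_pair] at hy₂
    rcases hy₂ with hyQ | rfl | rfl
    · rcases hy₁ with hyP | hyR
      · exact (hmeet y (hP₁P y hyP) hyQ).imp_right fun h => absurd (h ▸ hyP) hwP₁
      · obtain rfl := hRQ y hyR hyQ
        exact Or.inl (hxQ hyQ)
    · exact absurd hy₁ (by simp [hwP₁, hwR])
    · exact Or.inr rfl

theorem IsPath.hasDisjointPathsAvoiding (hloop : ∀ g, G.src g ≠ G.tgt g)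
    (hconn : ∀ x a b, a ≠ x → b ≠ x → ∃ w, G.IsWalk a w b ∧ x ∉ G.support a w ∧ e ∉ edges w)
    (hthird : ∀ a b : V, ∃ z, z ≠ a ∧ z ≠ b) {p : List (Dart E)}
    (hp : G.IsPath a p b) (hpe : e ∉ edges p) (hab : a ≠ b) :
    G.HasDisjointPathsAvoiding e a b := by
  induction p using List.reverseRecOn generalizing b with
  | nil => exact absurd hp.1.eq_of_nil hab
  | append_singleton p f ih =>
    obtain ⟨w, hpw, hfw⟩ := isWalk_append_iff.mp hp.1
    obtain ⟨rfl, rfl⟩ := isWalk_singleton_iff.mp hfw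
    rw [edges_append, edges_singleton, Set.mem_union, Set.mem_singleton_iff, not_or] at hpe
    have hfe : f.1 ≠ e := Ne.symm hpe.2
    by_cases haw : G.dsrc f = a
    · obtain ⟨z, hza, hzb⟩ := hthird (G.dsrc f) (G.dtgt f)
      exact haw ▸ hasDisjointPathsAvoiding_dsrc_dtgt hconn hza hzb (haw ▸ hab) hfe
    have hnd := List.nodup_append'.mp (support_append (G := G) a p [f] ▸ hp.2)
    have hbw : G.dtgt f ≠ G.dsrc f := fun h => hnd.2.2 hpw.end_mem_support (by simp [h])
    obtain ⟨P, Q, hP, hQ, hPe, hQe, hdisj, hmeet⟩ := ih ⟨hpw, hnd.1⟩ hpe.1 (Ne.symm haw)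
    obtain ⟨R₀, hR₀, hwR₀, heR₀⟩ := hconn (G.dsrc f) (G.dtgt f) a hbw (Ne.symm haw)
    obtain ⟨R₁, x, hR₁R₀, hR₁, hxS, hfirst⟩ := hR₀.exists_prefix_first_mem
      {y | y ∈ G.support a P ∨ y ∈ G.support a Q} (Or.inl (start_mem_support a P))
    obtain ⟨R, hR, hRR₁⟩ := hR₁.exists_isPath
    have hsupp : G.support (G.dtgt f) R ⊆ G.support (G.dtgt f) R₁ := support_subset_support hRR₁
    have hRe : e ∉ edges R := fun h => heR₀ (edges_subset_edges hR₁R₀ (edges_subset_edges hRR₁ h))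
    have hwR : G.dsrc f ∉ G.support (G.dtgt f) R :=
      fun h => hwR₀ (support_subset_support hR₁R₀ (hsupp h))
    rcases hxS with hxP | hxQ
    · exact hasDisjointPathsAvoiding_of_reroute hloop hP hQ hPe hQe hdisj hmeet rfl rfl hfe hab
        hR hRe hwR hxP (fun y hy h => hfirst y (hsupp hy) (Or.inl h))
        (fun y hy h => hfirst y (hsupp hy) (Or.inr h))
    · exact hasDisjointPathsAvoiding_of_reroute hloop hQ hP hQe hPe hdisj.symm
        (fun y hQ hP => hmeet y hP hQ) rfl rfl hfe hab hR hRe hwR hxQ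
        (fun y hy h => hfirst y (hsupp hy) (Or.inr h))
        (fun y hy h => hfirst y (hsupp hy) (Or.inl h))

end Whitney

theorem vertsOf_cons_reverseWalk (d : Dart E) (w : List (Dart E)) :
    G.vertsOf (d :: reverseWalk w) = {y | y ∈ G.support (G.dsrc d) w} := by
  ext y
  rw [mem_vertsOf, List.map_cons, map_dsrc_reverseWalk]
  simp [support]

theorem exists_cycles_of_hasDisjointPathsAvoiding {e : E} (he : G.src e ≠ G.tgt e)
    (l : E → ℝ) (h : G.HasDisjointPathsAvoiding e (G.src e) (G.tgt e)) :
    ∃ c1 c2 c3 : List (Dart E),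
      G.IsCycle c1 ∧ G.IsCycle c2 ∧ G.IsCycle c3 ∧
      (e, true) ∈ c1 ∧ (e, true) ∈ c2 ∧
      (edges c1 ∩ edges c2 = {e}) ∧
      (G.vertsOf c1 ∩ G.vertsOf c2 = {G.src e, G.tgt e}) ∧
      chain c3 = chain c1 - chain c2 ∧
      edges c3 = (edges c1 ∪ edges c2) \ {e} ∧
      l e = (walkLength l c1 + walkLength l c2 - walkLength l c3) / 2 := by
  obtain ⟨P, Q, hP, hQ, hPe, hQe, hdisj, hmeet⟩ := h
  have hE : G.IsPath (G.src e) [(e, true)] (G.tgt e) := isPath_singleton (d := (e, true)) he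
  have hEmeet : ∀ y, y ∈ G.support (G.src e) [(e, true)] → y = G.src e ∨ y = G.tgt e :=
    fun y hy => List.mem_pair.mp hy
  refine ⟨[(e, true)] ++ reverseWalk P, [(e, true)] ++ reverseWalk Q, Q ++ reverseWalk P,
    hP.isCycle_append_reverseWalk hE he (fun y _ hy => hEmeet y hy) (by simpa using hPe),
    hQ.isCycle_append_reverseWalk hE he (fun y _ hy => hEmeet y hy) (by simpa using hQe),
    hP.isCycle_append_reverseWalk hQ he hmeet hdisj, by simp, by simp, ?_, ?_, ?_, ?_, ?_⟩
  · simp only [edges_append, edges_singleton, edges_reverseWalk]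
    rw [← Set.union_inter_distrib_left, hdisj.inter_eq, Set.union_empty]
  · rw [List.singleton_append, List.singleton_append, vertsOf_cons_reverseWalk,
      vertsOf_cons_reverseWalk]
    ext y
    exact ⟨fun ⟨hyP, hyQ⟩ => hmeet y hyP hyQ, by
      rintro (rfl | rfl)
      exacts [⟨start_mem_support _ _, start_mem_support _ _⟩,
        ⟨hP.1.end_mem_support, hQ.1.end_mem_support⟩]⟩
  · simp only [chain_append, chain_reverseWalk]
    abel
  · ext g
    by_cases hg : g = e
    · subst hg
      simp [hPe, hQe]
    · simp only [edges_append, edges_singleton, edges_reverseWalk]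
      simp [hg, or_comm]
  · simp only [walkLength_append, walkLength_singleton, walkLength_reverseWalk]
    ring

theorem exists_ne_of_three_lt_card [Fintype V] (hcard : 3 < Fintype.card V) (x y z : V) :
    ∃ t, t ≠ x ∧ t ≠ y ∧ t ≠ z := by
  obtain ⟨t, -, ht⟩ := Finset.exists_mem_notMem_of_card_lt_card
    (s := {x, y, z}) (t := Finset.univ) (Finset.card_le_three.trans_lt hcard)
  exact ⟨t, by simpa [not_or] using ht⟩

theorem IsWalk.of_deleteVerts {X : Set V} {a b : {v // v ∉ X}}
    {w : List (Dart {e // G.src e ∉ X ∧ G.tgt e ∉ X})} (h : (G.deleteVerts X).IsWalk a w b) :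
    G.IsWalk a (w.map fun d => (d.1.1, d.2)) b ∧
      G.support a (w.map fun d => (d.1.1, d.2)) = ((G.deleteVerts X).support a w).map (↑) := by
  have hsrc : ∀ d : Dart {e // G.src e ∉ X ∧ G.tgt e ∉ X},
      G.dsrc (d.1.1, d.2) = ((G.deleteVerts X).dsrc d).1 := fun ⟨_, b⟩ => by cases b <;> rfl
  have htgt : ∀ d : Dart {e // G.src e ∉ X ∧ G.tgt e ∉ X},
      G.dtgt (d.1.1, d.2) = ((G.deleteVerts X).dtgt d).1 := fun ⟨_, b⟩ => by cases b <;> rfl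
  induction h with
  | nil => exact ⟨.nil _, rfl⟩
  | @cons u v d w hd h ih =>
    refine ⟨.cons (by rw [hsrc, hd]) (htgt d ▸ ih.1), ?_⟩
    simp only [List.map_cons, support_cons, htgt, ih.2]

theorem exists_isWalk_avoiding_of_conn {X : Set V} (hX : (G.deleteVerts X).Conn) {a b : V}
    (ha : a ∉ X) (hb : b ∉ X) : ∃ w, G.IsWalk a w b ∧ ∀ y ∈ G.support a w, y ∉ X := by
  obtain ⟨w, hw⟩ := hX ⟨a, ha⟩ ⟨b, hb⟩
  obtain ⟨hw, hsupp⟩ := (isWalk_iff_isWalkFrom.mpr hw).of_deleteVerts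
  refine ⟨_, hw, fun y hy => ?_⟩
  obtain ⟨y, -, rfl⟩ := List.mem_map.mp (hsupp ▸ hy)
  exact y.2

theorem exists_isWalk_avoiding_pair
    (h3conn : ∀ X : Finset V, X.card < 3 → (G.deleteVerts (X : Set V)).Conn) {x y a b : V}
    (hax : a ≠ x) (hay : a ≠ y) (hbx : b ≠ x) (hby : b ≠ y) :
    ∃ w, G.IsWalk a w b ∧ x ∉ G.support a w ∧ y ∉ G.support a w := by
  obtain ⟨w, hw, hXw⟩ := exists_isWalk_avoiding_of_conn
    (h3conn {x, y} (Finset.card_le_two.trans_lt (by norm_num))) (a := a) (b := b)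
    (by simp [hax, hay]) (by simp [hbx, hby])
  exact ⟨w, hw, fun h => hXw x h (by simp), fun h => hXw y h (by simp)⟩

theorem exists_isWalk_avoiding_vertex_edge (hloop : ∀ g, G.src g ≠ G.tgt g)
    (h3conn : ∀ X : Finset V, X.card < 3 → (G.deleteVerts (X : Set V)).Conn)
    (hfour : ∀ x y z : V, ∃ t, t ≠ x ∧ t ≠ y ∧ t ≠ z) (e : E) {x a b : V}
    (hax : a ≠ x) (hbx : b ≠ x) : ∃ w, G.IsWalk a w b ∧ x ∉ G.support a w ∧ e ∉ edges w := by
  -- A walk missing an end of `e` misses `e`. Otherwise route `a` and `b` to `src e`, going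
  -- from `tgt e` through a fourth vertex `z`.
  have hu : ∀ {c d w}, G.IsWalk c w d → G.src e ∉ G.support c w → e ∉ edges w :=
    fun h hu he => hu (h.endpoints_mem_support he).1
  have hv : ∀ {c d w}, G.IsWalk c w d → G.tgt e ∉ G.support c w → e ∉ edges w :=
    fun h hv he => hv (h.endpoints_mem_support he).2
  by_cases hxe : x = G.src e ∨ x = G.tgt e
  · obtain ⟨w, hw, hxw, -⟩ := exists_isWalk_avoiding_pair h3conn hax hax hbx hbx
    rcases hxe with rfl | rfl
    exacts [⟨w, hw, hxw, hu hw hxw⟩, ⟨w, hw, hxw, hv hw hxw⟩]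
  rw [not_or] at hxe
  have toSrc : ∀ t, t ≠ x → ∃ w, G.IsWalk t w (G.src e) ∧ x ∉ G.support t w ∧ e ∉ edges w := by
    intro t htx
    by_cases htv : t = G.tgt e
    · subst htv
      obtain ⟨z, hzx, hzu, hzv⟩ := hfour x (G.src e) (G.tgt e)
      obtain ⟨w₁, hw₁, hxw₁, huw₁⟩ :=
        exists_isWalk_avoiding_pair h3conn htx (hloop e).symm hzx hzu
      obtain ⟨w₂, hw₂, hxw₂, hvw₂⟩ :=
        exists_isWalk_avoiding_pair h3conn hzx hzv (Ne.symm hxe.1) (hloop e)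
      refine ⟨w₁ ++ w₂, hw₁.append hw₂, ?_, ?_⟩
      · rw [hw₁.mem_support_append_iff]; tauto
      · rw [edges_append]; exact fun h => h.elim (hu hw₁ huw₁) (hv hw₂ hvw₂)
    · obtain ⟨w, hw, hxw, hvw⟩ :=
        exists_isWalk_avoiding_pair h3conn htx htv (Ne.symm hxe.1) (hloop e)
      exact ⟨w, hw, hxw, hv hw hvw⟩
  obtain ⟨w₁, hw₁, hxw₁, hew₁⟩ := toSrc a hax
  obtain ⟨w₂, hw₂, hxw₂, hew₂⟩ := toSrc b hbx
  refine ⟨w₁ ++ reverseWalk w₂, hw₁.append hw₂.reverseWalk, ?_, ?_⟩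
  · rw [hw₁.mem_support_append_iff, hw₂.mem_support_reverseWalk_iff]; tauto
  · rw [edges_append, edges_reverseWalk]; exact fun h => h.elim hew₁ hew₂

end Multigraph

theorem stmt17_general {V E : Type} [Fintype V] (G : Multigraph V E)
    (l : E → ℝ)
    (hloop : ∀ e, G.src e ≠ G.tgt e)
    (hcard : 3 < Fintype.card V)
    (h3conn : ∀ X : Finset V, X.card < 3 → (G.deleteVerts (X : Set V)).Conn)
    (e : E) :
    ∃ c1 c2 c3 : List (Dart E),
      G.IsCycle c1 ∧ G.IsCycle c2 ∧ G.IsCycle c3 ∧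
      (e, true) ∈ c1 ∧ (e, true) ∈ c2 ∧
      (Multigraph.edges c1 ∩ Multigraph.edges c2 = {e}) ∧
      (G.vertsOf c1 ∩ G.vertsOf c2 = {G.src e, G.tgt e}) ∧
      Multigraph.chain c3 = Multigraph.chain c1 - Multigraph.chain c2 ∧
      Multigraph.edges c3 = (Multigraph.edges c1 ∪ Multigraph.edges c2) \ {e} ∧
      l e = (Multigraph.walkLength l c1 + Multigraph.walkLength l c2
              - Multigraph.walkLength l c3) / 2 := by
  have hfour := exists_ne_of_three_lt_card hcard
  have hconn := fun x a b => exists_isWalk_avoiding_vertex_edge (x := x) (a := a) (b := b)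
    hloop h3conn hfour e
  obtain ⟨z, hzu, hzv, -⟩ := hfour (G.src e) (G.tgt e) (G.tgt e)
  obtain ⟨w, hw, -, hwe⟩ := hconn z (G.src e) (G.tgt e) hzu.symm hzv.symm
  obtain ⟨p, hp, hpw⟩ := hw.exists_isPath
  refine exists_cycles_of_hasDisjointPathsAvoiding (hloop e) l ?_
  exact hp.hasDisjointPathsAvoiding hloop hconn
    (fun a b => (hfour a b b).imp fun _ h => ⟨h.1, h.2.1⟩)
    (fun h => hwe (edges_subset_edges hpw h)) (hloop e)

/-- in a 3-connected graph with positive edge lengths and no loops, every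
edge `e` lies on two cycles `c₁, c₂` that share only `e` and its endpoints; with
`c₃` homologous to `c₁ - c₂` and made of the remaining edges, one recovers
`l(e) = (l(c₁) + l(c₂) - l(c₃))/2`. -/
theorem stmt17 {V E : Type} [Fintype V] [Fintype E] (G : Multigraph V E)
    (l : E → ℝ) (hl : ∀ e, 0 < l e)
    (hloop : ∀ e, G.src e ≠ G.tgt e)
    (hcard : 3 < Fintype.card V)
    (h3conn : ∀ X : Finset V, X.card < 3 → (G.deleteVerts (X : Set V)).Conn)
    (e : E) :
    ∃ c1 c2 c3 : List (Dart E),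
      G.IsCycle c1 ∧ G.IsCycle c2 ∧ G.IsCycle c3 ∧
      (e, true) ∈ c1 ∧ (e, true) ∈ c2 ∧
      (Multigraph.edges c1 ∩ Multigraph.edges c2 = {e}) ∧
      (G.vertsOf c1 ∩ G.vertsOf c2 = {G.src e, G.tgt e}) ∧
      Multigraph.chain c3 = Multigraph.chain c1 - Multigraph.chain c2 ∧
      Multigraph.edges c3 = (Multigraph.edges c1 ∪ Multigraph.edges c2) \ {e} ∧
      l e = (Multigraph.walkLength l c1 + Multigraph.walkLength l c2
              - Multigraph.walkLength l c3) / 2 :=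
  stmt17_general G l hloop hcard h3conn e
end
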